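/- Fix V ∈ ℝ, δ ∈ ℝ, 0 < A_− ≤ A_+, and let k ∈ ℂ be different from the four branch points ∓V/2 ± iA_± (so that d_±(k) ≠ 0 and E_±(k) is invertible). Then the explicitly defined matrix functions φ_+(x,k) and φ_−(x,k) for the two-sided step potential are continuous in x on all of ℝ and satisfy the scattering problem ∂_x φ = (ikσ₃ + Q(x))·φ at every x ≠ 0. -/

import Mathlib

/-- The argument of a complex number normalized to lie in `[−π/2, 3π/2)`:
if `arg z ∈ (−π, −π/2)` we add `2π`. -/
noncomputable def argS (z : ℂ) : ℝ :=
  if Complex.arg z < -(Real.pi / 2) then Complex.arg z + 2 * Real.pi else Complex.arg z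

/-- The branch `λ(k;A) = √(r₁r₂)·exp(i(φ₁+φ₂)/2)` of `(k² + A²)^{1/2}`, where
`k − iA = r₁e^{iφ₁}`, `k + iA = r₂e^{iφ₂}` with `φ₁, φ₂ ∈ [−π/2, 3π/2)`;
its branch cut lies along the segment `i[−A,A]` and it is continuous from the
right on the cut. -/
noncomputable def lamBr (A : ℝ) (k : ℂ) : ℂ :=
  ((Real.sqrt (‖k - Complex.I * (A : ℂ)‖ * ‖k + Complex.I * (A : ℂ)‖) : ℝ) : ℂ) *
    Complex.exp (Complex.I *
      (((argS (k - Complex.I * (A : ℂ)) + argS (k + Complex.I * (A : ℂ))) / 2 : ℝ) : ℂ))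

/-- Pauli matrix `σ₃`. -/
noncomputable def sigma3 : Matrix (Fin 2) (Fin 2) ℂ := !![1, 0; 0, -1]

/-- Pauli matrix `σ₁`. -/
noncomputable def sigma1 : Matrix (Fin 2) (Fin 2) ℂ := !![0, 1; 1, 0]

/-- `exp(c·σ₃) = diag(e^c, e^{−c})` (matrix exponential of the diagonal matrix `cσ₃`). -/
noncomputable def dexp (c : ℂ) : Matrix (Fin 2) (Fin 2) ℂ :=
  !![Complex.exp c, 0; 0, Complex.exp (-c)]

/-- `λ₊(k) = λ(k + V/2; A₊)`. -/
noncomputable def lamP (Ap V : ℝ) (k : ℂ) : ℂ := lamBr Ap (k + (V : ℂ) / 2)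

/-- `λ₋(k) = λ(k − V/2; A₋)`. -/
noncomputable def lamM (Am V : ℝ) (k : ℂ) : ℂ := lamBr Am (k - (V : ℂ) / 2)

/-- `E₊(k) = I + (iA₊/(λ₊(k) + (k + V/2)))·exp(iδσ₃)·σ₁`. -/
noncomputable def Ep (Ap V δ : ℝ) (k : ℂ) : Matrix (Fin 2) (Fin 2) ℂ :=
  1 + (Complex.I * (Ap : ℂ) / (lamP Ap V k + (k + (V : ℂ) / 2))) •
      (dexp (Complex.I * (δ : ℂ)) * sigma1)

/-- `E₋(k) = I + (iA₋/(λ₋(k) + (k − V/2)))·exp(−iδσ₃)·σ₁`. -/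
noncomputable def Em (Am V δ : ℝ) (k : ℂ) : Matrix (Fin 2) (Fin 2) ℂ :=
  1 + (Complex.I * (Am : ℂ) / (lamM Am V k + (k - (V : ℂ) / 2))) •
      (dexp (-(Complex.I * (δ : ℂ))) * sigma1)

/-- `d₊(k) = √(D₊(k))` with `D₊(k) = 2λ₊(k)/(λ₊(k) + (k + V/2))` (principal root). -/
noncomputable def dP (Ap V : ℝ) (k : ℂ) : ℂ :=
  (2 * lamP Ap V k / (lamP Ap V k + (k + (V : ℂ) / 2))) ^ ((1 : ℂ) / 2)

/-- `d₋(k) = √(D₋(k))` with `D₋(k) = 2λ₋(k)/(λ₋(k) + (k − V/2))` (principal root). -/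
noncomputable def dM (Am V : ℝ) (k : ℂ) : ℂ :=
  (2 * lamM Am V k / (lamM Am V k + (k - (V : ℂ) / 2))) ^ ((1 : ℂ) / 2)

/-- The two-sided step potential `q(x) = A₊e^{−iVx+iδ}` for `x ≥ 0`,
`q(x) = A₋e^{iVx−iδ}` for `x < 0`. -/
noncomputable def qstep (Am Ap V δ : ℝ) (x : ℝ) : ℂ :=
  if 0 ≤ x then (Ap : ℂ) * Complex.exp (Complex.I * ((-V * x + δ : ℝ) : ℂ))
  else (Am : ℂ) * Complex.exp (Complex.I * ((V * x - δ : ℝ) : ℂ))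

/-- `Q(x) = [[0, q(x)],[−conj(q(x)), 0]]` for the two-sided step potential. -/
noncomputable def Qstep (Am Ap V δ : ℝ) (x : ℝ) : Matrix (Fin 2) (Fin 2) ℂ :=
  !![0, qstep Am Ap V δ x; -(starRingEnd ℂ) (qstep Am Ap V δ x), 0]

/-- The Jost matrix `φ₊(x,k)` of the two-sided step potential. -/
noncomputable def phiP (Am Ap V δ : ℝ) (k : ℂ) (x : ℝ) : Matrix (Fin 2) (Fin 2) ℂ :=
  (dP Ap V k)⁻¹ •
    (if 0 ≤ x then
      dexp (-(Complex.I) * ((V * x / 2 : ℝ) : ℂ)) * Ep Ap V δ k *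
        dexp (Complex.I * lamP Ap V k * (x : ℂ))
    else
      dexp (Complex.I * ((V * x / 2 : ℝ) : ℂ)) * Em Am V δ k *
        dexp (Complex.I * lamM Am V k * (x : ℂ)) * (Em Am V δ k)⁻¹ * Ep Ap V δ k)

/-- The Jost matrix `φ₋(x,k)` of the two-sided step potential. -/
noncomputable def phiM (Am Ap V δ : ℝ) (k : ℂ) (x : ℝ) : Matrix (Fin 2) (Fin 2) ℂ :=
  (dM Am V k)⁻¹ •
    (if 0 ≤ x then
      dexp (-(Complex.I) * ((V * x / 2 : ℝ) : ℂ)) * Ep Ap V δ k *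
        dexp (Complex.I * lamP Ap V k * (x : ℂ)) * (Ep Ap V δ k)⁻¹ * Em Am V δ k
    else
      dexp (Complex.I * ((V * x / 2 : ℝ) : ℂ)) * Em Am V δ k *
        dexp (Complex.I * lamM Am V k * (x : ℂ)))

/-!
On each half-line the Jost matrices are constant multiples of a plane wave
`Ψ(x) = e^{axσ₃} E e^{iλxσ₃}` followed by a constant matrix, with `a = ∓iV/2`.
Conjugating by `e^{axσ₃}` turns the potential `Q(x)` into a constant matrix `Q₀`, and `E`
diagonalises `iκσ₃ + Q₀` (`κ = k ± V/2`) with eigenvalues `±iλ` because `λ² = κ² + A²`;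
since `a + iκ = ik`, this gives `Ψ' = (ikσ₃ + Q)Ψ`. Continuity at `x = 0` reduces to
`E₋E₋⁻¹E₊ = E₊` and `E₊E₊⁻¹E₋ = E₋`, and `det E± = 2λ±/(λ± + κ)` vanishes only at the
branch points.
-/

open Complex Matrix

lemma norm_mul_exp_I_mul_argS (z : ℂ) : (‖z‖ : ℂ) * exp (I * argS z) = z := by
  rw [argS]
  split_ifs
  · push_cast
    rw [mul_add, exp_add, mul_comm I (2 * Real.pi), exp_two_pi_mul_I, mul_one, mul_comm I]
    exact norm_mul_exp_arg_mul_I z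
  · rw [mul_comm I]
    exact norm_mul_exp_arg_mul_I z

lemma lamBr_sq (A : ℝ) (k : ℂ) : lamBr A k ^ 2 = k ^ 2 + (A : ℂ) ^ 2 := by
  set z₁ := k - I * A
  set z₂ := k + I * A
  have hsqrt : ((√(‖z₁‖ * ‖z₂‖) : ℝ) : ℂ) ^ 2 = ‖z₁‖ * ‖z₂‖ := by
    rw [← ofReal_pow, Real.sq_sqrt (by positivity)]
    push_cast
    ring
  have hexp : exp (I * (((argS z₁ + argS z₂) / 2 : ℝ) : ℂ)) ^ 2
      = exp (I * argS z₁) * exp (I * argS z₂) := by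
    rw [← exp_add, sq, ← exp_add]
    push_cast
    ring_nf
  calc lamBr A k ^ 2 = (‖z₁‖ * exp (I * argS z₁)) * (‖z₂‖ * exp (I * argS z₂)) := by
        rw [lamBr, mul_pow, hsqrt, hexp]
        ring
    _ = k ^ 2 + (A : ℂ) ^ 2 := by
        rw [norm_mul_exp_I_mul_argS, norm_mul_exp_I_mul_argS]
        linear_combination (-(A : ℂ) ^ 2) * I_sq

section SquareRoot

variable {A κ lam : ℂ}

lemma add_ne_zero_of_sq_eq (hA : A ≠ 0) (hsq : lam ^ 2 = κ ^ 2 + A ^ 2) : lam + κ ≠ 0 := by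
  intro h
  rw [eq_neg_of_add_eq_zero_left h, neg_sq, left_eq_add] at hsq
  exact hA (pow_eq_zero_iff two_ne_zero |>.1 hsq)

lemma ne_zero_of_sq_eq (hsq : lam ^ 2 = κ ^ 2 + A ^ 2) (h₁ : κ ≠ I * A) (h₂ : κ ≠ -(I * A)) :
    lam ≠ 0 := by
  rintro rfl
  have : (κ - I * A) * (κ + I * A) = 0 := by linear_combination -hsq - A ^ 2 * I_sq
  rcases mul_eq_zero.1 this with h | h
  · exact h₁ (sub_eq_zero.1 h)
  · exact h₂ (eq_neg_of_add_eq_zero_left h)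

end SquareRoot

/-- `E₊ = Emat A₊ (k + V/2) λ₊ (iδ)` and `E₋ = Emat A₋ (k − V/2) λ₋ (−iδ)`. -/
noncomputable def Emat (A κ lam c : ℂ) : Matrix (Fin 2) (Fin 2) ℂ :=
  1 + (I * A / (lam + κ)) • (dexp c * sigma1)

/-- `[[0, q], [−q̄, 0]]` for `q = A e^c` when `A` is real and `c` is imaginary. -/
noncomputable def waveQ (A c : ℂ) : Matrix (Fin 2) (Fin 2) ℂ :=
  !![0, A * exp c; -(A * exp (-c)), 0]

noncomputable def planeWave (a lam : ℂ) (E : Matrix (Fin 2) (Fin 2) ℂ) (x : ℝ) :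
    Matrix (Fin 2) (Fin 2) ℂ :=
  dexp (a * x) * E * dexp (I * lam * x)

lemma dexp_zero : dexp 0 = 1 := by
  rw [dexp, one_fin_two, neg_zero, exp_zero]

lemma planeWave_zero (a lam : ℂ) (E : Matrix (Fin 2) (Fin 2) ℂ) : planeWave a lam E 0 = E := by
  simp [planeWave, dexp_zero]

lemma sigma3_mul_dexp (a : ℂ) : sigma3 * dexp a = dexp a * sigma3 := by
  ext i j; fin_cases i <;> fin_cases j <;> simp [sigma3, dexp]

lemma smul_sigma3 (b : ℂ) : b • sigma3 = !![b, 0; 0, -b] := by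
  rw [sigma3, smul_of]; simp

lemma waveQ_mul_dexp (A c a : ℂ) : waveQ A (c + 2 * a) * dexp a = dexp a * waveQ A c := by
  have h₁ : A * exp (c + 2 * a) * exp (-a) = exp a * (A * exp c) := by
    rw [mul_assoc, ← exp_add, mul_left_comm, ← exp_add]
    ring_nf
  have h₂ : -(A * exp (-(c + 2 * a))) * exp a = exp (-a) * -(A * exp (-c)) := by
    rw [neg_mul, mul_neg, mul_assoc, ← exp_add, mul_left_comm, ← exp_add]
    ring_nf
  simp only [waveQ, dexp, mul_fin_two, mul_zero, zero_mul, add_zero, zero_add, h₁, h₂]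

lemma Emat_eq (A κ lam c : ℂ) :
    Emat A κ lam c = !![1, I * A / (lam + κ) * exp c; I * A / (lam + κ) * exp (-c), 1] := by
  ext i j; fin_cases i <;> fin_cases j <;> simp [Emat, dexp, sigma1]

section Emat

variable {A κ lam : ℂ} (c : ℂ)

lemma det_Emat (hsq : lam ^ 2 = κ ^ 2 + A ^ 2) (hne : lam + κ ≠ 0) :
    (Emat A κ lam c).det = 2 * lam / (lam + κ) := by
  rw [Emat_eq, det_fin_two_of, exp_neg]
  field_simp
  linear_combination -hsq - A ^ 2 * I_sq

lemma Emat_mul_inv (hsq : lam ^ 2 = κ ^ 2 + A ^ 2) (hne : lam + κ ≠ 0) (hlam : lam ≠ 0) :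
    Emat A κ lam c * (Emat A κ lam c)⁻¹ = 1 :=
  mul_nonsing_inv _ <| by
    rw [det_Emat c hsq hne, isUnit_iff_ne_zero]
    exact div_ne_zero (mul_ne_zero two_ne_zero hlam) hne

lemma smul_sigma3_add_waveQ (b : ℂ) :
    b • sigma3 + waveQ A c = !![b, A * exp c; -(A * exp (-c)), -b] := by
  ext i j; fin_cases i <;> fin_cases j <;> simp [sigma3, waveQ]

lemma waveQ_mul_Emat (hsq : lam ^ 2 = κ ^ 2 + A ^ 2) (hne : lam + κ ≠ 0) :
    ((I * κ) • sigma3 + waveQ A c) * Emat A κ lam c = Emat A κ lam c * ((I * lam) • sigma3) := by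
  rw [smul_sigma3_add_waveQ, smul_sigma3, Emat_eq, mul_fin_two, mul_fin_two]
  simp only [EmbeddingLike.apply_eq_iff_eq, vecCons_inj, and_true, mul_zero, add_zero, zero_add,
    mul_one, one_mul, exp_neg]
  refine ⟨⟨?_, ?_⟩, ?_, ?_⟩ <;> field_simp
  · linear_combination -hsq
  · linear_combination A * (κ + lam) * I_sq
  · linear_combination -A * (κ + lam) * I_sq
  · linear_combination hsq

end Emat

section StepPotential

variable {Am Ap V δ : ℝ} {k : ℂ}

lemma Qstep_eq (x : ℝ) :
    Qstep Am Ap V δ x = if 0 ≤ x then waveQ Ap (I * δ + 2 * (-(I * V / 2) * x))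
      else waveQ Am (-(I * δ) + 2 * (I * V / 2 * x)) := by
  have hQ (A θ : ℝ) :
      !![0, (A : ℂ) * exp (I * θ); -(starRingEnd ℂ) ((A : ℂ) * exp (I * θ)), 0]
        = waveQ A (I * θ) := by
    rw [waveQ, map_mul, conj_ofReal, ← exp_conj, map_mul, conj_I, conj_ofReal, neg_mul]
  rw [Qstep, qstep]
  split_ifs <;> rw [hQ] <;> congr 2 <;> push_cast <;> ring

lemma phiP_eq : phiP Am Ap V δ k = fun x => (dP Ap V k)⁻¹ •
    if 0 ≤ x then planeWave (-(I * V / 2)) (lamP Ap V k) (Ep Ap V δ k) x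
    else planeWave (I * V / 2) (lamM Am V k) (Em Am V δ k) x * ((Em Am V δ k)⁻¹ * Ep Ap V δ k) := by
  funext x
  simp only [phiP, planeWave, ← mul_assoc]
  push_cast
  ring_nf

lemma phiM_eq : phiM Am Ap V δ k = fun x => (dM Am V k)⁻¹ •
    if 0 ≤ x then
      planeWave (-(I * V / 2)) (lamP Ap V k) (Ep Ap V δ k) x * ((Ep Ap V δ k)⁻¹ * Em Am V δ k)
    else planeWave (I * V / 2) (lamM Am V k) (Em Am V δ k) x := by
  funext x
  simp only [phiM, planeWave, ← mul_assoc]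
  push_cast
  ring_nf

lemma Ep_mul_inv (hAp : Ap ≠ 0) (h₁ : k ≠ -(V : ℂ) / 2 + I * Ap)
    (h₂ : k ≠ -(V : ℂ) / 2 - I * Ap) : Ep Ap V δ k * (Ep Ap V δ k)⁻¹ = 1 :=
  have hsq := lamBr_sq Ap (k + V / 2)
  Emat_mul_inv (lam := lamP Ap V k) _ hsq (add_ne_zero_of_sq_eq (ofReal_ne_zero.2 hAp) hsq)
    (ne_zero_of_sq_eq hsq (fun h => h₁ (by linear_combination h))
      (fun h => h₂ (by linear_combination h)))

lemma Em_mul_inv (hAm : Am ≠ 0) (h₃ : k ≠ (V : ℂ) / 2 + I * Am)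
    (h₄ : k ≠ (V : ℂ) / 2 - I * Am) : Em Am V δ k * (Em Am V δ k)⁻¹ = 1 :=
  have hsq := lamBr_sq Am (k - V / 2)
  Emat_mul_inv (lam := lamM Am V k) _ hsq (add_ne_zero_of_sq_eq (ofReal_ne_zero.2 hAm) hsq)
    (ne_zero_of_sq_eq hsq (fun h => h₃ (by linear_combination h))
      (fun h => h₄ (by linear_combination h)))

end StepPotential

section Calculus

attribute [local instance] Matrix.linftyOpNormedRing Matrix.linftyOpNormedAlgebra

lemma HasDerivAt.matrix_apply {n : Type*} [Fintype n] [DecidableEq n] {f : ℝ → Matrix n n ℂ}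
    {f' : Matrix n n ℂ} {x : ℝ} (h : HasDerivAt f f' x) (i j : n) :
    HasDerivAt (fun ξ => f ξ i j) (f' i j) x :=
  (entryLinearMap ℝ ℂ i j).toContinuousLinearMap.hasFDerivAt.comp_hasDerivAt x h

lemma HasDerivAt.ite_nonneg {E : Type*} [NormedAddCommGroup E] [NormedSpace ℝ E]
    {f g : ℝ → E} {f' g' : E} {x : ℝ} (hf : HasDerivAt f f' x) (hg : HasDerivAt g g' x)
    (hx : x ≠ 0) :
    HasDerivAt (fun ξ => if 0 ≤ ξ then f ξ else g ξ) (if 0 ≤ x then f' else g') x := by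
  rcases hx.lt_or_gt with hneg | hpos
  · rw [if_neg hneg.not_ge]
    exact hg.congr_of_eventuallyEq <| (eventually_lt_nhds hneg).mono fun ξ hξ => if_neg hξ.not_ge
  · rw [if_pos hpos.le]
    exact hf.congr_of_eventuallyEq <| (eventually_gt_nhds hpos).mono fun ξ hξ => if_pos hξ.le

lemma dexp_eq_exp (c : ℂ) : dexp c = NormedSpace.exp (c • sigma3) := by
  have : c • sigma3 = diagonal ![c, -c] := by
    ext i j; fin_cases i <;> fin_cases j <;> simp [sigma3]
  rw [this, exp_diagonal, dexp, Pi.exp_def, ← Complex.exp_eq_exp_ℂ]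
  ext i j; fin_cases i <;> fin_cases j <;> simp

lemma hasDerivAt_dexp_mul (a : ℂ) (x : ℝ) :
    HasDerivAt (fun ξ : ℝ => dexp (a * ξ)) ((a • sigma3) * dexp (a * x)) x := by
  have hsmul (ξ : ℝ) : (a * ξ) • sigma3 = ξ • a • sigma3 := by
    rw [← smul_assoc, real_smul, mul_comm]
  simp only [dexp_eq_exp, hsmul]
  exact hasDerivAt_exp_smul_const' (a • sigma3) x

lemma continuous_planeWave (a lam : ℂ) (E : Matrix (Fin 2) (Fin 2) ℂ) :
    Continuous (planeWave a lam E) := by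
  have hdexp (b : ℂ) : Continuous fun ξ : ℝ => dexp (b * ξ) :=
    continuous_iff_continuousAt.2 fun x => (hasDerivAt_dexp_mul b x).continuousAt
  exact ((hdexp a).mul continuous_const).mul (hdexp (I * lam))

lemma hasDerivAt_planeWave {A κ lam a k : ℂ} (c : ℂ) (ha : a + I * κ = I * k)
    (hsq : lam ^ 2 = κ ^ 2 + A ^ 2) (hne : lam + κ ≠ 0) (x : ℝ) :
    HasDerivAt (planeWave a lam (Emat A κ lam c))
      (((I * k) • sigma3 + waveQ A (c + 2 * (a * x))) * planeWave a lam (Emat A κ lam c) x) x := by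
  set D := dexp (a * x)
  set U := dexp (I * lam * x)
  set E := Emat A κ lam c
  have hcomm (b : ℂ) : (b • sigma3) * D = D * (b • sigma3) := by
    rw [smul_mul_assoc, sigma3_mul_dexp, mul_smul_comm]
  refine (((hasDerivAt_dexp_mul a x).mul_const E).mul
    (hasDerivAt_dexp_mul (I * lam) x)).congr_deriv ?_
  calc (a • sigma3) * D * E * U + D * E * ((I * lam) • sigma3 * U)
      = D * ((a • sigma3) * E + E * ((I * lam) • sigma3)) * U := by
        rw [hcomm]
        noncomm_ring
    _ = D * (((I * k) • sigma3 + waveQ A c) * E) * U := by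
        rw [← waveQ_mul_Emat c hsq hne, ← ha, add_smul]
        noncomm_ring
    _ = ((I * k) • sigma3 + waveQ A (c + 2 * (a * x))) * (D * E * U) := by
        conv_rhs => rw [← mul_assoc, ← mul_assoc, add_mul, hcomm, waveQ_mul_dexp]
        noncomm_ring

variable {Am Ap V δ : ℝ} {k : ℂ}

lemma hasDerivAt_planeWave_Ep (hAp : Ap ≠ 0) (x : ℝ) :
    HasDerivAt (planeWave (-(I * V / 2)) (lamP Ap V k) (Ep Ap V δ k))
      (((I * k) • sigma3 + waveQ Ap (I * δ + 2 * (-(I * V / 2) * x))) *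
        planeWave (-(I * V / 2)) (lamP Ap V k) (Ep Ap V δ k) x) x :=
  have hsq := lamBr_sq Ap (k + V / 2)
  hasDerivAt_planeWave (A := Ap) (κ := k + V / 2) (lam := lamP Ap V k) _ (by ring) hsq
    (add_ne_zero_of_sq_eq (ofReal_ne_zero.2 hAp) hsq) x

lemma hasDerivAt_planeWave_Em (hAm : Am ≠ 0) (x : ℝ) :
    HasDerivAt (planeWave (I * V / 2) (lamM Am V k) (Em Am V δ k))
      (((I * k) • sigma3 + waveQ Am (-(I * δ) + 2 * (I * V / 2 * x))) *
        planeWave (I * V / 2) (lamM Am V k) (Em Am V δ k) x) x :=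
  have hsq := lamBr_sq Am (k - V / 2)
  hasDerivAt_planeWave (A := Am) (κ := k - V / 2) (lam := lamM Am V k) _ (by ring) hsq
    (add_ne_zero_of_sq_eq (ofReal_ne_zero.2 hAm) hsq) x

lemma hasDerivAt_phiP (hAm : Am ≠ 0) (hAp : Ap ≠ 0) {x : ℝ} (hx : x ≠ 0) :
    HasDerivAt (phiP Am Ap V δ k)
      (((I * k) • sigma3 + Qstep Am Ap V δ x) * phiP Am Ap V δ k x) x := by
  rw [phiP_eq, Qstep_eq]
  refine (((hasDerivAt_planeWave_Ep hAp x).ite_nonneg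
    ((hasDerivAt_planeWave_Em hAm x).mul_const _) hx).const_smul (dP Ap V k)⁻¹).congr_deriv ?_
  beta_reduce
  split_ifs <;> simp only [mul_smul_comm, mul_assoc]

lemma hasDerivAt_phiM (hAm : Am ≠ 0) (hAp : Ap ≠ 0) {x : ℝ} (hx : x ≠ 0) :
    HasDerivAt (phiM Am Ap V δ k)
      (((I * k) • sigma3 + Qstep Am Ap V δ x) * phiM Am Ap V δ k x) x := by
  rw [phiM_eq, Qstep_eq]
  refine ((((hasDerivAt_planeWave_Ep hAp x).mul_const _).ite_nonneg
    (hasDerivAt_planeWave_Em hAm x) hx).const_smul (dM Am V k)⁻¹).congr_deriv ?_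
  beta_reduce
  split_ifs <;> simp only [mul_smul_comm, mul_assoc]

lemma continuous_phiP (hAm : Am ≠ 0) (h₃ : k ≠ (V : ℂ) / 2 + I * Am)
    (h₄ : k ≠ (V : ℂ) / 2 - I * Am) : Continuous (phiP Am Ap V δ k) := by
  rw [phiP_eq]
  refine ((continuous_planeWave _ _ _).if_le ((continuous_planeWave _ _ _).mul continuous_const)
    continuous_const continuous_id ?_).const_smul (dP Ap V k)⁻¹
  rintro x rfl
  simp only [Pi.mul_apply, planeWave_zero, ← mul_assoc, Em_mul_inv hAm h₃ h₄, one_mul]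

lemma continuous_phiM (hAp : Ap ≠ 0) (h₁ : k ≠ -(V : ℂ) / 2 + I * Ap)
    (h₂ : k ≠ -(V : ℂ) / 2 - I * Ap) : Continuous (phiM Am Ap V δ k) := by
  rw [phiM_eq]
  refine (((continuous_planeWave _ _ _).mul continuous_const).if_le (continuous_planeWave _ _ _)
    continuous_const continuous_id ?_).const_smul (dM Am V k)⁻¹
  rintro x rfl
  simp only [Pi.mul_apply, planeWave_zero, ← mul_assoc, Ep_mul_inv hAp h₁ h₂, one_mul]

end Calculus

/-- For `k` different from the four branch points `∓V/2 ± iA±`, the explicit Jost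
matrices `φ₊(x,k)` and `φ₋(x,k)` of the two-sided step potential are continuous in `x`
on all of `ℝ` and satisfy the scattering problem `∂ₓφ = (ikσ₃ + Q(x))φ` at every
`x ≠ 0`. -/
theorem step_Jost_continuous_and_solve (Am Ap V δ : ℝ) (hm : 0 < Am) (hmp : Am ≤ Ap)
    (k : ℂ)
    (h1 : k ≠ -(V : ℂ) / 2 + Complex.I * (Ap : ℂ))
    (h2 : k ≠ -(V : ℂ) / 2 - Complex.I * (Ap : ℂ))
    (h3 : k ≠ (V : ℂ) / 2 + Complex.I * (Am : ℂ))
    (h4 : k ≠ (V : ℂ) / 2 - Complex.I * (Am : ℂ)) :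
    Continuous (fun x : ℝ => phiP Am Ap V δ k x) ∧
    Continuous (fun x : ℝ => phiM Am Ap V δ k x) ∧
    (∀ x : ℝ, x ≠ 0 → ∀ i j : Fin 2,
      HasDerivAt (fun ξ : ℝ => phiP Am Ap V δ k ξ i j)
        ((((Complex.I * k) • sigma3 + Qstep Am Ap V δ x) * phiP Am Ap V δ k x) i j) x) ∧
    (∀ x : ℝ, x ≠ 0 → ∀ i j : Fin 2,
      HasDerivAt (fun ξ : ℝ => phiM Am Ap V δ k ξ i j)
        ((((Complex.I * k) • sigma3 + Qstep Am Ap V δ x) * phiM Am Ap V δ k x) i j) x) := by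
  have hAm : Am ≠ 0 := hm.ne'
  have hAp : Ap ≠ 0 := (hm.trans_le hmp).ne'
  exact ⟨continuous_phiP hAm h3 h4, continuous_phiM hAp h1 h2,
    fun _ hx => (hasDerivAt_phiP hAm hAp hx).matrix_apply,
    fun _ hx => (hasDerivAt_phiM hAm hAp hx).matrix_apply⟩
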